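/- Let R_{ijkl} be an algebraic curvature tensor on ℝⁿ (with the usual symmetries and first Bianchi identity) whose sectional curvatures satisfy δ < K ≤ 1. Then for pairwise distinct indices i, j, k, l, |R_{ijkl}| < (2/3)(1 − δ). -/

import Mathlib

/-! Write `F(X, Y, Z, W) = ∑ R_{ijkl} X^i Y^j Z^k W^l`. Polarizing the quartic form `F(X, Y, X, Y)`
over the sign choices in `e_p ± e_q`, `e_r ± e_s` (distinct indices, so each such pair spans a plane
with `|X|²|Y|² − ⟨X,Y⟩² = 4`) gives
`8 (R_{prqs} + R_{psqr}) = ∑ ε η F(e_p + ε e_q, e_r + η e_s, e_p + ε e_q, e_r + η e_s)`,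
and pinching bounds the right-hand side by `8 (1 − δ)` in absolute value. Applied to `(i, k, j, l)`
and `(i, l, j, k)`, the two resulting sums differ by `3 R_{ijkl}` by the first Bianchi identity. -/

open Finset

namespace Berger

variable {n : ℕ}

noncomputable def curvForm (R : Fin n → Fin n → Fin n → Fin n → ℝ) (X Y Z W : Fin n → ℝ) : ℝ :=
  ∑ i, ∑ j, ∑ k, ∑ l, R i j k l * X i * Y j * Z k * W l

noncomputable def gramDet (X Y : Fin n → ℝ) : ℝ :=
  (∑ i, X i ^ 2) * (∑ i, Y i ^ 2) - (∑ i, X i * Y i) ^ 2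

theorem curvForm_polarization (R : Fin n → Fin n → Fin n → Fin n → ℝ) (x y z w : Fin n → ℝ) :
    curvForm R (x + z) (y + w) (x + z) (y + w) - curvForm R (x + z) (y - w) (x + z) (y - w)
      - curvForm R (x - z) (y + w) (x - z) (y + w) + curvForm R (x - z) (y - w) (x - z) (y - w)
      = 4 * (curvForm R x y z w + curvForm R x w z y + curvForm R z y x w + curvForm R z w x y) := by
  simp only [curvForm, Pi.add_apply, Pi.sub_apply, ← sum_add_distrib, ← sum_sub_distrib, mul_sum]
  refine sum_congr rfl fun i _ => sum_congr rfl fun j _ => sum_congr rfl fun k _ =>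
    sum_congr rfl fun l _ => ?_
  ring

theorem curvForm_single (R : Fin n → Fin n → Fin n → Fin n → ℝ) (p q r s : Fin n) :
    curvForm R (Pi.single p 1) (Pi.single q 1) (Pi.single r 1) (Pi.single s 1) = R p q r s := by
  simp [curvForm, Pi.single_apply]

theorem gramDet_single_add_single {p q r s : Fin n} (hpq : p ≠ q) (hrs : r ≠ s) (hpr : p ≠ r)
    (hps : p ≠ s) (hqr : q ≠ r) (hqs : q ≠ s) (a b : ℝ) :
    gramDet (Pi.single p 1 + Pi.single q a) (Pi.single r 1 + Pi.single s b)
      = (1 + a ^ 2) * (1 + b ^ 2) := by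
  simp [gramDet, Pi.single_apply, add_sq, add_mul, mul_add, sum_add_distrib, ite_pow, mul_ite,
    ite_mul, hpq.symm, hrs.symm, hpr.symm, hps.symm, hqr.symm, hqs.symm]

def IsPinched (δ : ℝ) (R : Fin n → Fin n → Fin n → Fin n → ℝ) : Prop :=
  ∀ X Y : Fin n → ℝ, 0 < gramDet X Y →
    δ * gramDet X Y < curvForm R X Y X Y ∧ curvForm R X Y X Y ≤ gramDet X Y

theorem IsPinched.curvForm_single_add_single {δ : ℝ} {R : Fin n → Fin n → Fin n → Fin n → ℝ}
    (hR : IsPinched δ R) {p q r s : Fin n} (hpq : p ≠ q) (hrs : r ≠ s) (hpr : p ≠ r)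
    (hps : p ≠ s) (hqr : q ≠ r) (hqs : q ≠ s) {a b : ℝ} (ha : a ^ 2 = 1) (hb : b ^ 2 = 1) :
    4 * δ < curvForm R (Pi.single p 1 + Pi.single q a) (Pi.single r 1 + Pi.single s b)
        (Pi.single p 1 + Pi.single q a) (Pi.single r 1 + Pi.single s b) ∧
      curvForm R (Pi.single p 1 + Pi.single q a) (Pi.single r 1 + Pi.single s b)
        (Pi.single p 1 + Pi.single q a) (Pi.single r 1 + Pi.single s b) ≤ 4 := by
  have h4 := gramDet_single_add_single hpq hrs hpr hps hqr hqs a b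
  rw [ha, hb] at h4
  norm_num at h4
  have h := hR _ _ (by rw [h4]; norm_num)
  rw [h4] at h
  exact ⟨by linarith [h.1], h.2⟩

theorem IsPinched.abs_add_lt {δ : ℝ} {R : Fin n → Fin n → Fin n → Fin n → ℝ}
    (hR : IsPinched δ R) (hsymm : ∀ i j k l, R i j k l = R k l i j) {p q r s : Fin n}
    (hpq : p ≠ q) (hrs : r ≠ s) (hpr : p ≠ r) (hps : p ≠ s) (hqr : q ≠ r) (hqs : q ≠ s) :
    |R p r q s + R p s q r| < 1 - δ := by
  have hpol := curvForm_polarization R (Pi.single p 1) (Pi.single r 1) (Pi.single q 1)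
    (Pi.single s 1)
  rw [curvForm_single, curvForm_single, curvForm_single, curvForm_single, hsymm q r p s,
    hsymm q s p r, sub_eq_add_neg (Pi.single p 1), sub_eq_add_neg (Pi.single r 1),
    ← Pi.single_neg, ← Pi.single_neg] at hpol
  have one : (1 : ℝ) ^ 2 = 1 := one_pow 2
  have neg_one : (-1 : ℝ) ^ 2 = 1 := neg_one_sq
  have h₁ := hR.curvForm_single_add_single hpq hrs hpr hps hqr hqs one one
  have h₂ := hR.curvForm_single_add_single hpq hrs hpr hps hqr hqs one neg_one
  have h₃ := hR.curvForm_single_add_single hpq hrs hpr hps hqr hqs neg_one one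
  have h₄ := hR.curvForm_single_add_single hpq hrs hpr hps hqr hqs neg_one neg_one
  rw [abs_lt]
  constructor <;> linarith [h₁.1, h₁.2, h₂.1, h₂.2, h₃.1, h₃.2, h₄.1, h₄.2]

end Berger

theorem stmt_11_general (n : ℕ) (δ : ℝ)
    (R : Fin n → Fin n → Fin n → Fin n → ℝ)
    (hanti₂ : ∀ i j k l, R i j k l = -R i j l k)
    (hsymm : ∀ i j k l, R i j k l = R k l i j)
    (hbianchi : ∀ i j k l, R i j k l + R i k l j + R i l j k = 0)
    (hpinch : ∀ X Y : Fin n → ℝ,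
      0 < (∑ i, X i ^ 2) * (∑ i, Y i ^ 2) - (∑ i, X i * Y i) ^ 2 →
      δ * ((∑ i, X i ^ 2) * (∑ i, Y i ^ 2) - (∑ i, X i * Y i) ^ 2)
          < ∑ i, ∑ j, ∑ k, ∑ l, R i j k l * X i * Y j * X k * Y l ∧
      (∑ i, ∑ j, ∑ k, ∑ l, R i j k l * X i * Y j * X k * Y l)
          ≤ (∑ i, X i ^ 2) * (∑ i, Y i ^ 2) - (∑ i, X i * Y i) ^ 2) :
    ∀ i j k l : Fin n, i ≠ j → i ≠ k → i ≠ l → j ≠ k → j ≠ l → k ≠ l →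
      |R i j k l| < 2/3 * (1 - δ) := by
  intro i j k l hij hik hil hjk hjl hkl
  have hR : Berger.IsPinched δ R := hpinch
  have h₁ : |R i j k l + R i l k j| < 1 - δ :=
    hR.abs_add_lt hsymm hik hjl hij hil hjk.symm hkl
  have h₂ : |R i j l k + R i k l j| < 1 - δ :=
    hR.abs_add_lt hsymm hil hjk hij hik hjl.symm hkl.symm
  have hBianchi : 3 * R i j k l = (R i j k l + R i l k j) - (R i j l k + R i k l j) := by
    linarith [hanti₂ i l k j, hanti₂ i j k l, hbianchi i j k l]
  rw [abs_lt] at h₁ h₂ ⊢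
  constructor <;> linarith [h₁.1, h₁.2, h₂.1, h₂.2]

/-- Berger's estimate: an algebraic curvature tensor on ℝⁿ whose sectional
curvatures K(X,Y) = R(X,Y,X,Y)/(|X|²|Y|² − ⟨X,Y⟩²) all lie in (δ, 1] satisfies
|R_{ijkl}| < (2/3)(1−δ) for pairwise distinct indices. -/
theorem stmt_11 (n : ℕ) (δ : ℝ)
    (R : Fin n → Fin n → Fin n → Fin n → ℝ)
    (hanti₁ : ∀ i j k l, R i j k l = -R j i k l)
    (hanti₂ : ∀ i j k l, R i j k l = -R i j l k)
    (hsymm : ∀ i j k l, R i j k l = R k l i j)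
    (hbianchi : ∀ i j k l, R i j k l + R i k l j + R i l j k = 0)
    (hpinch : ∀ X Y : Fin n → ℝ,
      0 < (∑ i, X i ^ 2) * (∑ i, Y i ^ 2) - (∑ i, X i * Y i) ^ 2 →
      δ * ((∑ i, X i ^ 2) * (∑ i, Y i ^ 2) - (∑ i, X i * Y i) ^ 2)
          < ∑ i, ∑ j, ∑ k, ∑ l, R i j k l * X i * Y j * X k * Y l ∧
      (∑ i, ∑ j, ∑ k, ∑ l, R i j k l * X i * Y j * X k * Y l)
          ≤ (∑ i, X i ^ 2) * (∑ i, Y i ^ 2) - (∑ i, X i * Y i) ^ 2) :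
    ∀ i j k l : Fin n, i ≠ j → i ≠ k → i ≠ l → j ≠ k → j ≠ l → k ≠ l →
      |R i j k l| < 2/3 * (1 - δ) :=
  stmt_11_general n δ R hanti₂ hsymm hbianchi hpinch
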